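/- Let ν > 0 and 0 ≤ b < a. Then lim_{t→∞} t^{ν+1} (F_{ν+1}(a,t) − F_{ν+1}(b,t)) = C_{ν+1}, where C_{ν+1} := (a^{2ν+2} − b^{2ν+2}) / (2^{ν+1} Γ(ν+2)). -/

import Mathlib

open MeasureTheory Filter

/-- `F ν x t = (x^{2ν}/(2^ν Γ(ν))) ∫_t^∞ s^{-(ν+1)} exp(-x²/(2s)) ds`. -/
noncomputable def F (ν x t : ℝ) : ℝ :=
  (x ^ (2 * ν) / (2 ^ ν * Real.Gamma ν)) *
    ∫ s in Set.Ioi t, s ^ (-(ν + 1)) * Real.exp (-x ^ 2 / (2 * s))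

/-!
Since `∫_t^∞ s^{-(p+1)} ds = t^{-p}/p`, the quantity `t^p ∫_t^∞ s^{-(p+1)} g(s) ds` lies between
`g(t)/p` and `L/p` whenever `g` is nondecreasing on `(0, ∞)` with limit `L`; hence it tends to `L/p`.
With `g(s) = exp(-x²/(2s)) → 1` this gives `t^ν F_ν(x,t) → x^{2ν}/(2^ν ν Γ(ν)) = x^{2ν}/(2^ν Γ(ν+1))`,
and the theorem is the difference of the cases `x = a` and `x = b` at index `ν + 1`.
-/

open Set Real Topology

lemma setIntegral_Ioi_rpow_neg_add_one {p t : ℝ} (hp : 0 < p) (ht : 0 < t) :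
    ∫ s in Ioi t, s ^ (-(p + 1)) = t ^ (-p) / p := by
  rw [integral_Ioi_rpow_of_lt (by linarith) ht, show -(p + 1) + 1 = -p by ring]
  field_simp

lemma rpow_mul_setIntegral_Ioi_rpow_mul_mem_Icc {g : ℝ → ℝ} {p t c d : ℝ} (hp : 0 < p)
    (ht : 0 < t) (hgm : AEStronglyMeasurable g (volume.restrict (Ioi t)))
    (hg : ∀ s ∈ Ioi t, g s ∈ Icc c d) :
    t ^ p * ∫ s in Ioi t, s ^ (-(p + 1)) * g s ∈ Icc (c / p) (d / p) := by
  have hpow : IntegrableOn (fun s : ℝ => s ^ (-(p + 1))) (Ioi t) :=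
    integrableOn_Ioi_rpow_of_lt (by linarith) ht
  have hint : IntegrableOn (fun s => s ^ (-(p + 1)) * g s) (Ioi t) := by
    refine hpow.mul_bdd hgm (c := max |c| |d|) ?_
    filter_upwards [ae_restrict_mem measurableSet_Ioi] with s hs
    exact abs_le_max_abs_abs (hg s hs).1 (hg s hs).2
  have hconst (e : ℝ) : t ^ p * ∫ s in Ioi t, s ^ (-(p + 1)) * e = e / p := by
    rw [integral_mul_const, setIntegral_Ioi_rpow_neg_add_one hp ht, rpow_neg ht.le]
    field_simp
  have hnonneg : ∀ s ∈ Ioi t, 0 ≤ s ^ (-(p + 1)) := fun s hs =>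
    rpow_nonneg (ht.trans hs).le _
  constructor
  · rw [← hconst c]
    refine mul_le_mul_of_nonneg_left ?_ (rpow_nonneg ht.le _)
    refine setIntegral_mono_on (hpow.mul_const c) hint measurableSet_Ioi fun s hs => ?_
    exact mul_le_mul_of_nonneg_left (hg s hs).1 (hnonneg s hs)
  · rw [← hconst d]
    refine mul_le_mul_of_nonneg_left ?_ (rpow_nonneg ht.le _)
    refine setIntegral_mono_on hint (hpow.mul_const d) measurableSet_Ioi fun s hs => ?_
    exact mul_le_mul_of_nonneg_left (hg s hs).2 (hnonneg s hs)

theorem tendsto_rpow_mul_setIntegral_Ioi_rpow_mul_of_monotoneOn {g : ℝ → ℝ} {p L : ℝ}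
    (hp : 0 < p) (hgm : Measurable g) (hg : MonotoneOn g (Ioi 0))
    (hL : Tendsto g atTop (𝓝 L)) :
    Tendsto (fun t => t ^ p * ∫ s in Ioi t, s ^ (-(p + 1)) * g s) atTop (𝓝 (L / p)) := by
  have hle_lim : ∀ s ∈ Ioi (0 : ℝ), g s ≤ L := fun s hs =>
    ge_of_tendsto hL <| (eventually_ge_atTop s).mono fun u hu => hg hs (lt_of_lt_of_le hs hu) hu
  have hbounds : ∀ᶠ t in atTop,
      t ^ p * ∫ s in Ioi t, s ^ (-(p + 1)) * g s ∈ Icc (g t / p) (L / p) := by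
    filter_upwards [eventually_gt_atTop 0] with t ht
    exact rpow_mul_setIntegral_Ioi_rpow_mul_mem_Icc hp ht hgm.aestronglyMeasurable
      fun s hs => ⟨hg ht (ht.trans hs) hs.le, hle_lim s (ht.trans hs)⟩
  exact tendsto_of_tendsto_of_tendsto_of_le_of_le' (hL.div_const p) tendsto_const_nhds
    (hbounds.mono fun _ h => h.1) (hbounds.mono fun _ h => h.2)

theorem tendsto_rpow_mul_F {ν : ℝ} (hν : 0 < ν) (x : ℝ) :
    Tendsto (fun t => t ^ ν * F ν x t) atTop
      (𝓝 (x ^ (2 * ν) / (2 ^ ν * Gamma (ν + 1)))) := by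
  have hmono : MonotoneOn (fun s : ℝ => exp (-x ^ 2 / (2 * s))) (Ioi 0) := by
    intro s hs u _ hsu
    rw [exp_le_exp, neg_div, neg_div, neg_le_neg_iff]
    exact div_le_div_of_nonneg_left (sq_nonneg x) (by linarith [mem_Ioi.1 hs]) (by linarith)
  have hlim : Tendsto (fun s : ℝ => exp (-x ^ 2 / (2 * s))) atTop (𝓝 1) := by
    have h := tendsto_const_nhds (x := -x ^ 2).div_atTop
      (tendsto_id.const_mul_atTop (zero_lt_two : (0 : ℝ) < 2))
    rw [← exp_zero]
    exact (continuous_exp.tendsto 0).comp h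
  have h := (tendsto_rpow_mul_setIntegral_Ioi_rpow_mul_of_monotoneOn hν (by fun_prop) hmono
    hlim).const_mul (x ^ (2 * ν) / (2 ^ ν * Gamma ν))
  rw [Gamma_add_one hν.ne']
  convert h using 1
  · ext t
    simp only [F]
    ring
  · field_simp

theorem stmt_11_general (ν a b : ℝ) (hν : 0 < ν) :
    Tendsto (fun t : ℝ => t ^ (ν + 1) * (F (ν + 1) a t - F (ν + 1) b t)) atTop
      (nhds ((a ^ (2 * ν + 2) - b ^ (2 * ν + 2)) / (2 ^ (ν + 1) * Real.Gamma (ν + 2)))) := by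
  have h := (tendsto_rpow_mul_F (by linarith : 0 < ν + 1) a).sub
    (tendsto_rpow_mul_F (by linarith : 0 < ν + 1) b)
  simp only [← mul_sub] at h
  rwa [show ν + 1 + 1 = ν + 2 by ring, show 2 * (ν + 1) = 2 * ν + 2 by ring, ← sub_div] at h

theorem stmt_11 (ν a b : ℝ) (hν : 0 < ν) (hb : 0 ≤ b) (hba : b < a) :
    Tendsto (fun t : ℝ => t ^ (ν + 1) * (F (ν + 1) a t - F (ν + 1) b t)) atTop
      (nhds ((a ^ (2 * ν + 2) - b ^ (2 * ν + 2)) / (2 ^ (ν + 1) * Real.Gamma (ν + 2)))) :=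
  stmt_11_general ν a b hν
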